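/- arXiv:2409.19252 — 3 statements merged into one kernel-verified Lean document; each statement's English description precedes it below -/
import Mathlib

section
/- Let K < 0 be a real number, n, m ∈ ℕ. Let x ∈ ℝ^{n+1} lie on the Lorentz hyperboloid L^n_K (i.e. ⟨x,x⟩_L = 1/K and x₀ > 0), let W be a real m × (n+1) matrix, and let v ∈ ℝ^{n+1} satisfy vᵀx ≠ 0 (Euclidean dot product). Define the (m+1) × (n+1) matrix f_x(M) whose first row is (√(‖Wx‖² − 1/K)/(vᵀx))·vᵀ and whose remaining m rows are W, where ‖·‖ is the Euclidean norm on ℝ^m. Then the vector y = f_x(M)·x lies on L^m_K, i.e. ⟨y,y⟩_L = 1/K and y₀ > 0. -/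
/-- The Lorentzian scalar product on `ℝ^{n+1}`:
`⟨x,y⟩_L = -x₀y₀ + ∑_{i=1}^n x_i y_i`. -/
def lprod {n : ℕ} (x y : Fin (n + 1) → ℝ) : ℝ :=
  -(x 0 * y 0) + ∑ i : Fin n, x i.succ * y i.succ

/-- **Theorem 1.** If `x` lies on the Lorentz hyperboloid `L^n_K` (`K < 0`),
`W` is an `m × (n+1)` real matrix, and `v ∈ ℝ^{n+1}` satisfies `vᵀx ≠ 0`,
then the vector `y = f_x(M)·x`, where `f_x(M)` has first row
`(√(‖Wx‖² − 1/K)/(vᵀx))·vᵀ` and remaining rows `W`, lies on `L^m_K`. -/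
theorem hyperbolic_linear_layer_maps_hyperboloid_to_hyperboloid
    (K : ℝ) (hK : K < 0) (n m : ℕ)
    (x : Fin (n + 1) → ℝ) (hx : lprod x x = 1 / K) (hx0 : x 0 > 0)
    (W : Matrix (Fin m) (Fin (n + 1)) ℝ)
    (v : Fin (n + 1) → ℝ) (hv : (∑ i, v i * x i) ≠ 0)
    (F : Matrix (Fin (m + 1)) (Fin (n + 1)) ℝ)
    (hF0 : ∀ j, F 0 j =
      (Real.sqrt ((∑ i, (W.mulVec x i) ^ 2) - 1 / K) / (∑ i, v i * x i)) * v j)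
    (hFsucc : ∀ (i : Fin m) (j : Fin (n + 1)), F i.succ j = W i j)
    (y : Fin (m + 1) → ℝ) (hy : y = F.mulVec x) :
    lprod y y = 1 / K ∧ y 0 > 0 := by
  have hSpos : 0 < (∑ i, (W.mulVec x i) ^ 2) - 1 / K := by
    have h1 : (0:ℝ) ≤ ∑ i, (W.mulVec x i) ^ 2 :=
      Finset.sum_nonneg fun i _ => sq_nonneg _
    have h2 : 1 / K < 0 := div_neg_of_pos_of_neg one_pos hK
    linarith
  set S : ℝ := (∑ i, (W.mulVec x i) ^ 2) - 1 / K with hS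
  have hy0 : y 0 = Real.sqrt S := by
    rw [hy]
    simp only [Matrix.mulVec, dotProduct]
    rw [Finset.sum_congr rfl fun j _ => by rw [hF0 j]]
    rw [show (∑ j, Real.sqrt S / (∑ i, v i * x i) * v j * x j)
        = Real.sqrt S / (∑ i, v i * x i) * ∑ j, v j * x j by
      rw [Finset.mul_sum]; exact Finset.sum_congr rfl fun j _ => by ring]
    field_simp
  have hysucc : ∀ i : Fin m, y i.succ = W.mulVec x i := by
    intro i
    rw [hy]
    simp only [Matrix.mulVec, dotProduct]
    exact Finset.sum_congr rfl fun j _ => by rw [hFsucc i j]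
  have hsq : Real.sqrt S * Real.sqrt S = S := Real.mul_self_sqrt hSpos.le
  constructor
  · unfold lprod
    rw [hy0]
    have h3 : (∑ i : Fin m, y i.succ * y i.succ) = ∑ i, (W.mulVec x i) ^ 2 :=
      Finset.sum_congr rfl fun i _ => by rw [hysucc i]; ring
    rw [h3, hsq, hS]
    ring
  · rw [hy0]; exact Real.sqrt_pos.mpr hSpos
end

section
/- Let K < 0 be a real number, n ∈ ℕ, x ∈ ℝ^{n+1} with ⟨x,x⟩_L = 1/K and x₀ > 0, and let v ∈ ℝ^{n+1} be nonzero with ⟨v,x⟩_L = 0 (so that ⟨v,v⟩_L > 0). Let ‖v‖_L = √(⟨v,v⟩_L) and define exp_x^K(v) := cosh(√(−K)‖v‖_L)·x + sinh(√(−K)‖v‖_L)·v/(√(−K)‖v‖_L). Then ⟨exp_x^K(v), exp_x^K(v)⟩_L = 1/K and the 0-th coordinate of exp_x^K(v) is positive; that is, exp_x^K(v) lies on L^n_K. -/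
lemma lprod_comb {n : ℕ} (a b : ℝ) (x v : Fin (n + 1) → ℝ) :
    lprod (fun i => a * x i + b * v i) (fun i => a * x i + b * v i)
      = a ^ 2 * lprod x x + 2 * a * b * lprod x v + b ^ 2 * lprod v v := by
  simp only [lprod]
  rw [Finset.sum_congr rfl (fun i _ => show
      (a * x i.succ + b * v i.succ) * (a * x i.succ + b * v i.succ)
        = a * a * (x i.succ * x i.succ) + 2 * a * b * (x i.succ * v i.succ)
          + b * b * (v i.succ * v i.succ) from by ring),
    Finset.sum_add_distrib, Finset.sum_add_distrib,
    ← Finset.mul_sum, ← Finset.mul_sum, ← Finset.mul_sum]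
  ring

lemma lprod_comm {n : ℕ} (x y : Fin (n + 1) → ℝ) : lprod x y = lprod y x := by
  simp only [lprod]
  rw [Finset.sum_congr rfl (fun i _ => mul_comm (x i.succ) (y i.succ))]
  ring

set_option maxHeartbeats 1000000 in
/-- For `K < 0`, `x ∈ L^n_K` and a nonzero tangent vector `v` at `x`
(`⟨v,x⟩_L = 0`), with `θ = √(−K)·‖v‖_L` where `‖v‖_L = √(⟨v,v⟩_L)`, the
exponential map `exp_x^K(v) = cosh(θ)·x + sinh(θ)·v/θ` satisfies
`⟨exp_x^K(v), exp_x^K(v)⟩_L = 1/K` and has positive `0`-th coordinate,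
i.e. it lies on `L^n_K`. -/
theorem exp_map_lies_on_hyperboloid (K : ℝ) (hK : K < 0) (n : ℕ)
    (x : Fin (n + 1) → ℝ) (hx : lprod x x = 1 / K) (hx0 : x 0 > 0)
    (v : Fin (n + 1) → ℝ) (hv : v ≠ 0) (hvx : lprod v x = 0)
    (θ : ℝ) (hθ : θ = Real.sqrt (-K) * Real.sqrt (lprod v v))
    (e : Fin (n + 1) → ℝ)
    (he : e = fun i => Real.cosh θ * x i + Real.sinh θ * v i / θ) :
    lprod e e = 1 / K ∧ e 0 > 0 := by
  have hKne : K ≠ 0 := hK.ne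
  have hKinv : 1 / K < 0 := one_div_neg.mpr hK
  set Sx := ∑ i : Fin n, x i.succ * x i.succ with hSx
  set Sv := ∑ i : Fin n, v i.succ * v i.succ with hSv
  set Sxv := ∑ i : Fin n, x i.succ * v i.succ with hSxv
  have hxx : -(x 0 * x 0) + Sx = 1 / K := hx
  have hvv : lprod v v = -(v 0 * v 0) + Sv := rfl
  have hvx' : -(v 0 * x 0) + Sxv = 0 := by
    have h := (lprod_comm x v).trans hvx
    simp only [lprod, ← hSxv] at h
    linarith [mul_comm (x 0) (v 0)]
  have hCS : Sxv * Sxv ≤ Sx * Sv := by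
    have h := Finset.sum_mul_sq_le_sq_mul_sq Finset.univ
      (fun i : Fin n => x i.succ) (fun i : Fin n => v i.succ)
    simp only [pow_two] at h
    rw [← hSx, ← hSv, ← hSxv] at h
    exact h
  have hSvnn : 0 ≤ Sv := Finset.sum_nonneg fun i _ => mul_self_nonneg _
  have hSvpos : 0 < Sv := by
    rcases hSvnn.lt_or_eq with h | h
    · exact h
    · exfalso
      apply hv
      have hz : ∀ i : Fin n, v i.succ = 0 := by
        intro i
        have h0 : ∑ j : Fin n, v j.succ * v j.succ = 0 := by rw [← hSv, ← h]
        have := (Finset.sum_eq_zero_iff_of_nonneg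
          (fun j _ => mul_self_nonneg (v j.succ))).mp h0 i (Finset.mem_univ i)
        exact mul_self_eq_zero.mp this
      have hSxv0 : Sxv = 0 := by
        rw [hSxv]
        exact Finset.sum_eq_zero fun i _ => by rw [hz i, mul_zero]
      have hv0z : v 0 = 0 := by
        have : v 0 * x 0 = 0 := by linarith [hvx', hSxv0]
        rcases mul_eq_zero.mp this with h' | h'
        · exact h'
        · linarith
      funext i
      refine Fin.cases ?_ ?_ i
      · exact hv0z
      · exact hz
  have hCS' : (v 0 * x 0) * (v 0 * x 0) ≤ Sx * Sv := by
    have hveq : v 0 * x 0 = Sxv := by linarith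
    rw [hveq]; exact hCS
  have hP : 0 < lprod v v := by
    rw [hvv]
    nlinarith [hCS', hxx, mul_pos hx0 hx0, mul_pos hSvpos (neg_pos.mpr hKinv)]
  have hθpos : 0 < θ := by
    rw [hθ]
    exact mul_pos (Real.sqrt_pos.mpr (neg_pos.mpr hK)) (Real.sqrt_pos.mpr hP)
  have hθne : θ ≠ 0 := hθpos.ne'
  have hθ2 : θ ^ 2 = -K * lprod v v := by
    rw [hθ, mul_pow, Real.sq_sqrt (by linarith), Real.sq_sqrt hP.le]
  have hxv : lprod x v = 0 := (lprod_comm x v).trans hvx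
  have hcs := Real.cosh_sq_sub_sinh_sq θ
  have hee : lprod e e = Real.cosh θ ^ 2 * lprod x x
      + 2 * Real.cosh θ * (Real.sinh θ / θ) * lprod x v
      + (Real.sinh θ / θ) ^ 2 * lprod v v := by
    rw [he]
    have : (fun i => Real.cosh θ * x i + Real.sinh θ * v i / θ)
        = fun i => Real.cosh θ * x i + (Real.sinh θ / θ) * v i := by
      funext i; ring
    rw [this, lprod_comb]
  have hterm : (Real.sinh θ / θ) ^ 2 * lprod v v = Real.sinh θ ^ 2 / (-K) := by
    have hvveq : lprod v v = θ ^ 2 / (-K) := by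
      rw [hθ2]
      field_simp
    rw [hvveq, div_pow]
    field_simp
  constructor
  · rw [hee, hx, hxv, mul_zero, hterm]
    linear_combination (1 / K) * hcs
  · -- e 0 > 0
    have hv0sq : v 0 * v 0 ≤ θ ^ 2 * (x 0 * x 0) - lprod v v := by
      have hKCS := mul_le_mul_of_nonneg_left hCS' (neg_pos.mpr hK).le
      have hxxK : (-(x 0 * x 0) + Sx) * K = 1 := by
        rw [hxx]; field_simp
      have hxxKSv : ((-(x 0 * x 0) + Sx) * K) * Sv = Sv := by rw [hxxK, one_mul]
      rw [hθ2, hvv]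
      nlinarith [hKCS, hxxKSv]
    have hc2 : Real.cosh θ ^ 2 = Real.sinh θ ^ 2 + 1 := by linarith
    have h1 : Real.sinh θ ^ 2 * (v 0 * v 0)
        ≤ Real.sinh θ ^ 2 * (θ ^ 2 * (x 0 * x 0) - lprod v v) :=
      mul_le_mul_of_nonneg_left hv0sq (sq_nonneg _)
    have hkey : (Real.sinh θ * v 0) ^ 2 < (θ * (Real.cosh θ * x 0)) ^ 2 := by
      nlinarith [h1, mul_nonneg (sq_nonneg (Real.sinh θ)) hP.le,
        mul_pos (pow_pos hθpos 2) (mul_pos hx0 hx0), hc2]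
    have he0 : e 0 = Real.cosh θ * x 0 + Real.sinh θ * v 0 / θ := by rw [he]
    have hθe : θ * e 0 = θ * (Real.cosh θ * x 0) + Real.sinh θ * v 0 := by
      rw [he0]; field_simp
    have hpos : 0 < θ * (Real.cosh θ * x 0) :=
      mul_pos hθpos (mul_pos (Real.cosh_pos θ) hx0)
    have hθe0 : 0 < θ * e 0 := by
      rw [hθe]
      nlinarith [hkey, hpos]
    nlinarith [hθe0, hθpos]
end

section
/- Let K < 0 be a real number, n, m ∈ ℕ, let y₁, …, y_m ∈ ℝ^{n+1} all lie on the Lorentz hyperboloid L^n_K, and let a₁, …, a_m ≥ 0 be nonnegative reals with at least one a_i > 0. Then the weighted sum s := Σ_{i=1}^m a_i y_i satisfies ⟨s,s⟩_L ≤ (1/K)·(Σ_{i=1}^m a_i)² < 0 and s₀ > 0. In particular, s is a timelike vector in the upper cone, so the normalization s/(√(−K)·√(−⟨s,s⟩_L)) lies on L^n_K. -/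
open Finset

lemma Real.sqrt_mul_le_mul_sub_mul {a b q r : ℝ} (hq : 0 ≤ q) (hqa : q ≤ a) (hr : 0 ≤ r)
    (hrb : r ≤ b) : √((a ^ 2 - q ^ 2) * (b ^ 2 - r ^ 2)) ≤ a * b - q * r := by
  rw [Real.sqrt_le_iff]
  constructor
  · nlinarith [mul_le_mul hqa hrb hr (hq.trans hqa)]
  · nlinarith [sq_nonneg (a * r - b * q)]

lemma sum_smul_apply_pos {ι α : Type*} [Fintype ι] {a : ι → ℝ} {y : ι → α → ℝ} {k : α}
    (ha : ∀ i, 0 ≤ a i) (ha' : ∃ i, 0 < a i) (hy : ∀ i, 0 < y i k) :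
    0 < (∑ i, a i • y i) k := by
  obtain ⟨i₀, hi₀⟩ := ha'
  simp only [Finset.sum_apply, Pi.smul_apply, smul_eq_mul]
  exact sum_pos' (fun i _ => mul_nonneg (ha i) (hy i).le) ⟨i₀, mem_univ _, mul_pos hi₀ (hy i₀)⟩

namespace Lorentz

variable {n : ℕ}

lemma lprod_comm (x z : Fin (n + 1) → ℝ) : lprod x z = lprod z x := by
  simp only [lprod, mul_comm]

lemma lprod_sum_smul_left {m : ℕ} (a : Fin m → ℝ) (y : Fin m → Fin (n + 1) → ℝ)
    (z : Fin (n + 1) → ℝ) : lprod (∑ i, a i • y i) z = ∑ i, a i * lprod (y i) z := by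
  simp only [lprod, Finset.sum_apply, Pi.smul_apply, smul_eq_mul, sum_mul, mul_add, mul_sum,
    sum_add_distrib]
  rw [sum_comm]
  simp only [← sum_neg_distrib, mul_neg, mul_assoc]

lemma lprod_div_div (x : Fin (n + 1) → ℝ) (d : ℝ) :
    lprod (fun j => x j / d) (fun j => x j / d) = lprod x x / d ^ 2 := by
  simp only [lprod, div_mul_div_comm]
  rw [← neg_div, ← sum_div, ← add_div, sq]

noncomputable def spatialNorm (x : Fin (n + 1) → ℝ) : ℝ :=
  √(∑ i : Fin n, x i.succ ^ 2)

lemma spatialNorm_nonneg (x : Fin (n + 1) → ℝ) : 0 ≤ spatialNorm x :=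
  Real.sqrt_nonneg _

lemma lprod_self (x : Fin (n + 1) → ℝ) : lprod x x = -x 0 ^ 2 + spatialNorm x ^ 2 := by
  rw [spatialNorm, Real.sq_sqrt (sum_nonneg fun i _ => sq_nonneg _), lprod]
  simp only [sq]

lemma lprod_le_neg_mul_add_spatialNorm_mul (x z : Fin (n + 1) → ℝ) :
    lprod x z ≤ -(x 0 * z 0) + spatialNorm x * spatialNorm z :=
  add_le_add_right (Real.sum_mul_le_sqrt_mul_sqrt _ _ _) _

lemma spatialNorm_le_of_lprod_self_nonpos {x : Fin (n + 1) → ℝ} (hx : lprod x x ≤ 0)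
    (hx0 : 0 ≤ x 0) : spatialNorm x ≤ x 0 := by
  rw [lprod_self] at hx
  exact le_of_pow_le_pow_left₀ two_ne_zero hx0 (by linarith)

theorem lprod_le_neg_sqrt_mul_sqrt {x z : Fin (n + 1) → ℝ} (hx : lprod x x ≤ 0)
    (hz : lprod z z ≤ 0) (hx0 : 0 ≤ x 0) (hz0 : 0 ≤ z 0) :
    lprod x z ≤ -(√(-lprod x x) * √(-lprod z z)) := by
  have aczel := Real.sqrt_mul_le_mul_sub_mul (spatialNorm_nonneg x)
    (spatialNorm_le_of_lprod_self_nonpos hx hx0) (spatialNorm_nonneg z)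
    (spatialNorm_le_of_lprod_self_nonpos hz hz0)
  have hx' : -lprod x x = x 0 ^ 2 - spatialNorm x ^ 2 := by rw [lprod_self]; ring
  have hz' : -lprod z z = z 0 ^ 2 - spatialNorm z ^ 2 := by rw [lprod_self]; ring
  rw [← Real.sqrt_mul (neg_nonneg.mpr hx), hx', hz']
  linarith [lprod_le_neg_mul_add_spatialNorm_mul x z]

theorem lprod_le_of_lprod_self_eq {c : ℝ} (hc : c ≤ 0) {x z : Fin (n + 1) → ℝ}
    (hx : lprod x x = c) (hz : lprod z z = c) (hx0 : 0 ≤ x 0) (hz0 : 0 ≤ z 0) :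
    lprod x z ≤ c := by
  have h := lprod_le_neg_sqrt_mul_sqrt (hx.trans_le hc) (hz.trans_le hc) hx0 hz0
  rwa [hx, hz, Real.mul_self_sqrt (neg_nonneg.mpr hc), neg_neg] at h

theorem lprod_sum_smul_self_le {m : ℕ} {c : ℝ} (a : Fin m → ℝ) (ha : ∀ i, 0 ≤ a i)
    (y : Fin m → Fin (n + 1) → ℝ) (hy : ∀ i j, lprod (y i) (y j) ≤ c) :
    lprod (∑ i, a i • y i) (∑ i, a i • y i) ≤ c * (∑ i, a i) ^ 2 :=
  calc lprod (∑ i, a i • y i) (∑ i, a i • y i)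
      = ∑ i, a i * ∑ j, a j * lprod (y j) (y i) := by
        simp only [lprod_sum_smul_left, lprod_comm _ (∑ j, a j • y j)]
    _ ≤ ∑ i, a i * ∑ j, a j * c := by
        gcongr with i _ j _
        · exact ha i
        · exact ha j
        · exact hy j i
    _ = c * (∑ i, a i) ^ 2 := by simp only [← sum_mul]; ring

lemma lprod_div_sqrt_mul_sqrt_self {K : ℝ} (hK : K < 0) {s : Fin (n + 1) → ℝ}
    (hs : lprod s s < 0) :
    lprod (fun j => s j / (√(-K) * √(-lprod s s))) (fun j => s j / (√(-K) * √(-lprod s s)))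
      = 1 / K := by
  rw [lprod_div_div, mul_pow, Real.sq_sqrt (by linarith), Real.sq_sqrt (by linarith)]
  field_simp [hs.ne]

end Lorentz

open Lorentz in
/-- For `K < 0`, points `y₁, …, y_m ∈ L^n_K` and nonnegative weights
`a₁, …, a_m` with at least one positive, the weighted sum `s = ∑ aᵢ yᵢ`
satisfies `⟨s,s⟩_L ≤ (1/K)(∑ aᵢ)² < 0` and `s₀ > 0`; in particular `s` is
timelike in the upper cone and its normalization
`s/(√(−K)·√(−⟨s,s⟩_L))` lies on `L^n_K`. -/
theorem weighted_sum_timelike_and_aggregation_on_hyperboloid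
    (K : ℝ) (hK : K < 0) (n m : ℕ)
    (y : Fin m → Fin (n + 1) → ℝ)
    (hy : ∀ i, lprod (y i) (y i) = 1 / K) (hy0 : ∀ i, y i 0 > 0)
    (a : Fin m → ℝ) (ha : ∀ i, 0 ≤ a i) (ha' : ∃ i, 0 < a i)
    (s : Fin (n + 1) → ℝ) (hs : s = ∑ i, a i • y i) :
    lprod s s ≤ (1 / K) * (∑ i, a i) ^ 2 ∧
    (1 / K) * (∑ i, a i) ^ 2 < 0 ∧
    s 0 > 0 ∧
    lprod (fun j => s j / (Real.sqrt (-K) * Real.sqrt (-(lprod s s))))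
        (fun j => s j / (Real.sqrt (-K) * Real.sqrt (-(lprod s s)))) = 1 / K ∧
    (fun j => s j / (Real.sqrt (-K) * Real.sqrt (-(lprod s s)))) 0 > 0 := by
  have hK' : 1 / K < 0 := one_div_neg.mpr hK
  have hpair : ∀ i j, lprod (y i) (y j) ≤ 1 / K := fun i j =>
    lprod_le_of_lprod_self_eq hK'.le (hy i) (hy j) (hy0 i).le (hy0 j).le
  have hle : lprod s s ≤ 1 / K * (∑ i, a i) ^ 2 := hs ▸ lprod_sum_smul_self_le a ha y hpair
  have hbound : 1 / K * (∑ i, a i) ^ 2 < 0 := by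
    obtain ⟨i₀, hi₀⟩ := ha'
    exact mul_neg_of_neg_of_pos hK' (pow_pos (sum_pos' (fun i _ => ha i) ⟨i₀, mem_univ _, hi₀⟩) 2)
  have htime : lprod s s < 0 := hle.trans_lt hbound
  have hfuture : s 0 > 0 := hs ▸ sum_smul_apply_pos ha ha' hy0
  exact ⟨hle, hbound, hfuture, lprod_div_sqrt_mul_sqrt_self hK htime,
    div_pos hfuture <|
      mul_pos (Real.sqrt_pos.mpr (neg_pos.mpr hK)) (Real.sqrt_pos.mpr (neg_pos.mpr htime))⟩
end
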